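/- arXiv:1910.08460 — 2 statements merged into one kernel-verified Lean document; each statement's English description precedes it below -/
import Mathlib

section
/- Suppose δ_j < 1/2. Then for every integer p ≥ 1, ‖(R_j E)^{p−1}(I − P_j) P̂_j‖_2 ≤ (δ'_j)^p / (1 − 2δ_j), where δ'_j ≤ δ_j. -/
open Matrix Finset

noncomputable def opNorm {d : ℕ} (A : Matrix (Fin d) (Fin d) ℝ) : ℝ :=
  ‖Matrix.toEuclideanCLM (𝕜 := ℝ) A‖

noncomputable def hsNorm {d : ℕ} (A : Matrix (Fin d) (Fin d) ℝ) : ℝ :=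
  Real.sqrt (Matrix.trace (Aᵀ * A))

noncomputable def proj {d : ℕ} (u : Fin d → ℝ) : Matrix (Fin d) (Fin d) ℝ :=
  Matrix.vecMulVec u u

/-- `|R_j|^{1/2}` : square root of the absolute value of the reduced resolvent. -/
noncomputable def sqrtAbsRes {d : ℕ} (lam : Fin d → ℝ) (u : Fin d → Fin d → ℝ)
    (j : Fin d) : Matrix (Fin d) (Fin d) ℝ :=
  ∑ k ∈ Finset.univ.filter (fun k => k ≠ j), (Real.sqrt |lam k - lam j|)⁻¹ • proj (u k)

/-- `|R_j|^{-1/2}`. -/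
noncomputable def invSqrtAbsRes {d : ℕ} (lam : Fin d → ℝ) (u : Fin d → Fin d → ℝ)
    (j : Fin d) : Matrix (Fin d) (Fin d) ℝ :=
  ∑ k ∈ Finset.univ.filter (fun k => k ≠ j), Real.sqrt |lam k - lam j| • proj (u k)

/-- the reduced resolvent `R_j`. -/
noncomputable def res {d : ℕ} (lam : Fin d → ℝ) (u : Fin d → Fin d → ℝ)
    (j : Fin d) : Matrix (Fin d) (Fin d) ℝ :=
  ∑ k ∈ Finset.univ.filter (fun k => k ≠ j), (lam k - lam j)⁻¹ • proj (u k)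

/-- `δ_j`. -/
noncomputable def delta {d : ℕ} (lam : Fin d → ℝ) (u : Fin d → Fin d → ℝ) (j : Fin d)
    (gj : ℝ) (E : Matrix (Fin d) (Fin d) ℝ) : ℝ :=
  opNorm ((sqrtAbsRes lam u j + (Real.sqrt gj)⁻¹ • proj (u j)) * E *
    (sqrtAbsRes lam u j + (Real.sqrt gj)⁻¹ • proj (u j)))

/-- `δ'_j`. -/
noncomputable def delta' {d : ℕ} (lam : Fin d → ℝ) (u : Fin d → Fin d → ℝ) (j : Fin d)
    (gj : ℝ) (E : Matrix (Fin d) (Fin d) ℝ) : ℝ :=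
  max (opNorm (sqrtAbsRes lam u j * E * sqrtAbsRes lam u j))
    (max ((Real.sqrt gj)⁻¹ * hsNorm (sqrtAbsRes lam u j * E * proj (u j)))
      (gj⁻¹ * hsNorm (proj (u j) * E * proj (u j))))

/-!
Write `S = |R_j|^{1/2}`, `T = |R_j|^{-1/2}`, `P = P_j` and `F = S + g^{-1/2} P`, so that
`δ_j = ‖F E F‖`. Since `(1 - P) F = S` and `P F = g^{-1/2} P`, the three quantities in `δ'_j` are
compressions of `F E F` by `1 - P` and `P`, whence `δ'_j ≤ δ_j`.

For the second claim, `R_j = S W S` with `‖W‖ ≤ 1` and `1 - P = S T`, so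
`(R_j E)^{p-1} (1 - P) = S B^{p-1} T` with `B = W (S E S)`, `‖B‖ ≤ δ'_j`, and it remains to bound
`t = ‖T û_j‖`. As `E = F⁻¹ (F E F) F⁻¹`, the quadratic form of `E` is bounded by `δ_j` times that of
`F⁻² = Σ_k w_k P_k` (`w_j = g`, `w_k = |λ_k - λ_j|`); a min-max argument then gives
`|λ̂_j - λ_j| ≤ δ_j g`, so by the eigenvalue equation `‖S E û_j‖ ≥ (1 - δ_j) t`. Splitting
`û_j = (u_j ⬝ û_j) u_j + S T û_j` gives `‖S E û_j‖ ≤ ‖S E u_j‖ + δ'_j t`, hence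
`(1 - 2 δ_j) t ≤ ‖S E u_j‖ ≤ g^{1/2} δ'_j`.
-/

open scoped Matrix.Norms.L2Operator
open WithLp

section Euclidean

variable {n : Type*} [Fintype n]

lemma norm_toLp_sq (v : n → ℝ) : ‖toLp 2 v‖ ^ 2 = v ⬝ᵥ v := by
  rw [EuclideanSpace.norm_sq_eq]
  simp [dotProduct, sq]

lemma norm_toLp_eq_one {v : n → ℝ} (hv : v ⬝ᵥ v = 1) : ‖toLp 2 v‖ = 1 := by
  rw [← pow_eq_one_iff_of_nonneg (norm_nonneg _) two_ne_zero, norm_toLp_sq, hv]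

lemma abs_dotProduct_le (v w : n → ℝ) : |v ⬝ᵥ w| ≤ ‖toLp 2 v‖ * ‖toLp 2 w‖ := by
  have := abs_real_inner_le_norm (toLp 2 v) (toLp 2 w)
  rwa [EuclideanSpace.inner_toLp_toLp, dotProduct_comm] at this

variable [DecidableEq n]

lemma norm_toLp_mulVec_le (A : Matrix n n ℝ) (v : n → ℝ) :
    ‖toLp 2 (A *ᵥ v)‖ ≤ ‖A‖ * ‖toLp 2 v‖ :=
  A.l2_opNorm_mulVec (toLp 2 v)

lemma norm_toLp_pow_mulVec_le (A : Matrix n n ℝ) (m : ℕ) (v : n → ℝ) :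
    ‖toLp 2 ((A ^ m) *ᵥ v)‖ ≤ ‖A‖ ^ m * ‖toLp 2 v‖ := by
  induction m generalizing v with
  | zero => simp
  | succ m ih =>
    rw [pow_succ, ← mulVec_mulVec, pow_succ, mul_assoc]
    exact (ih _).trans (mul_le_mul_of_nonneg_left (norm_toLp_mulVec_le A v) (by positivity))

lemma abs_dotProduct_mulVec_self_le (A : Matrix n n ℝ) (x : n → ℝ) :
    |x ⬝ᵥ (A *ᵥ x)| ≤ ‖A‖ * (x ⬝ᵥ x) := by
  calc |x ⬝ᵥ (A *ᵥ x)| ≤ ‖toLp 2 x‖ * ‖toLp 2 (A *ᵥ x)‖ := abs_dotProduct_le _ _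
    _ ≤ ‖toLp 2 x‖ * (‖A‖ * ‖toLp 2 x‖) := by gcongr; exact norm_toLp_mulVec_le A x
    _ = ‖A‖ * (x ⬝ᵥ x) := by rw [← norm_toLp_sq]; ring

end Euclidean

lemma exists_ne_zero_mulVec_eq_zero {m n K : Type*} [Fintype m] [Fintype n] [Field K]
    (M : Matrix m n K) (h : Fintype.card m < Fintype.card n) : ∃ v ≠ 0, M *ᵥ v = 0 := by
  have hker := LinearMap.ker_ne_bot_of_finrank_lt (f := M.mulVecLin) (by simpa using h)
  obtain ⟨v, hv, hv0⟩ := (Submodule.ne_bot_iff _).mp hker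
  exact ⟨v, hv0, hv⟩

section Norms

variable {d : ℕ}

lemma opNorm_eq_norm (A : Matrix (Fin d) (Fin d) ℝ) : opNorm A = ‖A‖ := rfl

lemma proj_mulVec (v w : Fin d → ℝ) : proj v *ᵥ w = (v ⬝ᵥ w) • v := by
  rw [proj, vecMulVec_mulVec, dotProduct_comm, op_smul_eq_smul]

lemma hsNorm_mul_proj (M : Matrix (Fin d) (Fin d) ℝ) {v : Fin d → ℝ} (hv : v ⬝ᵥ v = 1) :
    hsNorm (M * proj v) = ‖toLp 2 (M *ᵥ v)‖ := by
  rw [hsNorm, proj, mul_vecMulVec, transpose_vecMulVec, vecMulVec_mul_vecMulVec,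
    trace_vecMulVec, dotProduct_smul, hv, smul_eq_mul, mul_one, ← norm_toLp_sq,
    Real.sqrt_sq (norm_nonneg _)]

lemma hsNorm_mul_proj_le (M : Matrix (Fin d) (Fin d) ℝ) {v : Fin d → ℝ} (hv : v ⬝ᵥ v = 1) :
    hsNorm (M * proj v) ≤ ‖M‖ := by
  simpa [hsNorm_mul_proj M hv, norm_toLp_eq_one hv] using norm_toLp_mulVec_le M v

lemma hsNorm_smul {c : ℝ} (hc : 0 ≤ c) (M : Matrix (Fin d) (Fin d) ℝ) :
    hsNorm (c • M) = c * hsNorm M := by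
  rw [hsNorm, hsNorm, transpose_smul, smul_mul, Matrix.mul_smul, smul_smul, trace_smul,
    smul_eq_mul, Real.sqrt_mul (mul_self_nonneg c), Real.sqrt_mul_self hc]

end Norms

noncomputable def spectralSum {d : ℕ} (u : Fin d → Fin d → ℝ) (f : Fin d → ℝ) :
    Matrix (Fin d) (Fin d) ℝ :=
  ∑ k, f k • proj (u k)

section SpectralSum

variable {d : ℕ} {u : Fin d → Fin d → ℝ}

lemma spectralSum_mulVec (f v : Fin d → ℝ) :
    spectralSum u f *ᵥ v = ∑ k, (f k * (u k ⬝ᵥ v)) • u k := by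
  simp only [spectralSum, sum_mulVec, smul_mulVec, proj_mulVec, smul_smul]

lemma dotProduct_spectralSum_mulVec_self (f v : Fin d → ℝ) :
    v ⬝ᵥ (spectralSum u f *ᵥ v) = ∑ k, f k * (u k ⬝ᵥ v) ^ 2 := by
  rw [spectralSum_mulVec, dotProduct_sum]
  exact sum_congr rfl fun k _ => by rw [dotProduct_smul, smul_eq_mul, dotProduct_comm]; ring

lemma transpose_spectralSum (f : Fin d → ℝ) : (spectralSum u f)ᵀ = spectralSum u f := by
  simp only [spectralSum, transpose_sum, transpose_smul, proj, transpose_vecMulVec]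

lemma spectralSum_add (f g : Fin d → ℝ) :
    spectralSum u (f + g) = spectralSum u f + spectralSum u g := by
  simp only [spectralSum, Pi.add_apply, add_smul, sum_add_distrib]

lemma spectralSum_smul (c : ℝ) (f : Fin d → ℝ) :
    spectralSum u (c • f) = c • spectralSum u f := by
  simp only [spectralSum, smul_sum, smul_smul, Pi.smul_apply, smul_eq_mul]

lemma spectralSum_neg (f : Fin d → ℝ) : spectralSum u (-f) = -spectralSum u f := by
  simp [spectralSum, neg_smul, sum_neg_distrib]

lemma sum_filter_ne_smul_proj (j : Fin d) (a : Fin d → ℝ) :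
    ∑ k ∈ univ.filter (· ≠ j), a k • proj (u k) =
      spectralSum u (fun k => if k = j then 0 else a k) := by
  rw [sum_filter, spectralSum]
  exact sum_congr rfl fun k _ => by split_ifs <;> simp_all

lemma proj_eq_spectralSum (j : Fin d) :
    proj (u j) = spectralSum u (fun k => if k = j then 1 else 0) := by
  simp [spectralSum, ite_smul]

variable (hu : ∀ k l, u k ⬝ᵥ u l = if k = l then (1 : ℝ) else 0)
include hu

lemma dotProduct_sum_smul (c : Fin d → ℝ) (l : Fin d) : u l ⬝ᵥ ∑ k, c k • u k = c l := by
  simp [dotProduct_sum, hu]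

lemma dotProduct_spectralSum_mulVec (f v : Fin d → ℝ) (l : Fin d) :
    u l ⬝ᵥ (spectralSum u f *ᵥ v) = f l * (u l ⬝ᵥ v) := by
  rw [spectralSum_mulVec, dotProduct_sum_smul hu]

lemma spectralSum_mulVec_self (f : Fin d → ℝ) (j : Fin d) :
    spectralSum u f *ᵥ u j = f j • u j := by
  rw [spectralSum_mulVec, sum_eq_single j] <;> simp_all

lemma spectralSum_mul_spectralSum (f g : Fin d → ℝ) :
    spectralSum u f * spectralSum u g = spectralSum u (f * g) := by
  refine ext_iff_mulVec.mpr fun v => ?_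
  simp only [← mulVec_mulVec, spectralSum_mulVec (f := f), dotProduct_spectralSum_mulVec hu]
  rw [spectralSum_mulVec]
  simp [mul_assoc]

lemma spectralSum_mul_eq {f g h : Fin d → ℝ} (hfg : ∀ k, f k * g k = h k) :
    spectralSum u f * spectralSum u g = spectralSum u h := by
  rw [spectralSum_mul_spectralSum hu]; exact congrArg _ (funext hfg)

lemma spectralSum_one : spectralSum u 1 = 1 := by
  set U : Matrix (Fin d) (Fin d) ℝ := of u
  have hUUt : U * Uᵀ = 1 := by
    ext k l
    simpa [mul_apply, one_apply, dotProduct, U] using hu k l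
  rw [← mul_eq_one_comm.mp hUUt]
  ext i l
  simp [spectralSum, proj, Matrix.sum_apply, mul_apply, vecMulVec_apply, U]

lemma one_sub_proj_eq_spectralSum (j : Fin d) :
    1 - proj (u j) = spectralSum u (fun k => if k = j then 0 else 1) := by
  rw [← spectralSum_one hu, proj_eq_spectralSum, sub_eq_iff_eq_add, ← spectralSum_add]
  congr 1; funext k; simp only [Pi.one_apply, Pi.add_apply]; split_ifs <;> simp

lemma dotProduct_self_eq_sum_sq (v : Fin d → ℝ) : v ⬝ᵥ v = ∑ k, (u k ⬝ᵥ v) ^ 2 := by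
  have hv : v = ∑ k, (u k ⬝ᵥ v) • u k := by
    simpa [spectralSum_one hu] using spectralSum_mulVec (u := u) 1 v
  nth_rewrite 2 [hv]
  rw [dotProduct_sum]
  exact sum_congr rfl fun k _ => by rw [dotProduct_smul, smul_eq_mul, dotProduct_comm, sq]

lemma mul_norm_toLp_le_of_abs_dotProduct_le {v w : Fin d → ℝ} {a b : ℝ} (ha : 0 ≤ a)
    (hb : 0 ≤ b) (h : ∀ k, a * |u k ⬝ᵥ v| ≤ b * |u k ⬝ᵥ w|) :
    a * ‖toLp 2 v‖ ≤ b * ‖toLp 2 w‖ := by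
  refine pow_le_pow_iff_left₀ (by positivity) (by positivity) two_ne_zero |>.mp ?_
  rw [mul_pow, mul_pow, norm_toLp_sq, norm_toLp_sq, dotProduct_self_eq_sum_sq hu,
    dotProduct_self_eq_sum_sq hu w, mul_sum, mul_sum]
  refine sum_le_sum fun k _ => ?_
  rw [← sq_abs (u k ⬝ᵥ v), ← sq_abs (u k ⬝ᵥ w), ← mul_pow, ← mul_pow]
  exact pow_le_pow_left₀ (by positivity) (h k) 2

lemma norm_spectralSum_le {f : Fin d → ℝ} {c : ℝ} (hc : 0 ≤ c) (hf : ∀ k, |f k| ≤ c) :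
    ‖spectralSum u f‖ ≤ c := by
  rw [cstar_norm_def]
  refine ContinuousLinearMap.opNorm_le_bound _ hc fun x => ?_
  rw [← toLp_ofLp 2 x, toEuclideanCLM_toLp]
  simpa using mul_norm_toLp_le_of_abs_dotProduct_le hu zero_le_one hc fun k => by
    rw [dotProduct_spectralSum_mulVec hu, abs_mul, one_mul]
    exact mul_le_mul_of_nonneg_right (hf k) (abs_nonneg _)

lemma norm_proj_le_one (j : Fin d) : ‖proj (u j)‖ ≤ 1 := by
  rw [proj_eq_spectralSum]
  exact norm_spectralSum_le hu zero_le_one fun k => by split_ifs <;> simp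

lemma norm_one_sub_proj_le_one (j : Fin d) : ‖1 - proj (u j)‖ ≤ 1 := by
  rw [one_sub_proj_eq_spectralSum hu]
  exact norm_spectralSum_le hu zero_le_one fun k => by split_ifs <;> simp

end SpectralSum

section MinMax

variable {d : ℕ} {u uh : Fin d → Fin d → ℝ}

lemma exists_ne_zero_orthogonal (s t : Finset (Fin d)) (hst : d < #s + #t) :
    ∃ v ≠ 0, (∀ k ∉ s, u k ⬝ᵥ v = 0) ∧ ∀ k ∉ t, uh k ⬝ᵥ v = 0 := by
  let M : Matrix ({k // k ∉ s} ⊕ {k // k ∉ t}) (Fin d) ℝ :=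
    of (Sum.elim (fun k => u k) (fun k => uh k))
  obtain ⟨v, hv0, hv⟩ := exists_ne_zero_mulVec_eq_zero M (by
    have hs := card_le_univ s
    have ht := card_le_univ t
    simp only [Fintype.card_sum, Fintype.card_subtype_compl, Fintype.card_coe,
      Fintype.card_fin] at hs ht ⊢
    omega)
  exact ⟨v, hv0, fun k hk => congrFun hv (.inl ⟨k, hk⟩), fun k hk => congrFun hv (.inr ⟨k, hk⟩)⟩

lemma sum_mul_sq_le_of_forall_mem {f c : Fin d → ℝ} {s : Finset (Fin d)} {b : ℝ}
    (hf : ∀ k ∈ s, f k ≤ b) (hc : ∀ k ∉ s, c k = 0) :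
    ∑ k, f k * c k ^ 2 ≤ b * ∑ k, c k ^ 2 := by
  rw [mul_sum]
  refine sum_le_sum fun k _ => ?_
  by_cases hk : k ∈ s
  · exact mul_le_mul_of_nonneg_right (hf k hk) (sq_nonneg _)
  · simp [hc k hk]

lemma mul_sum_sq_le_of_forall_mem {f c : Fin d → ℝ} {s : Finset (Fin d)} {a : ℝ}
    (hf : ∀ k ∈ s, a ≤ f k) (hc : ∀ k ∉ s, c k = 0) :
    a * ∑ k, c k ^ 2 ≤ ∑ k, f k * c k ^ 2 := by
  rw [mul_sum]
  refine sum_le_sum fun k _ => ?_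
  by_cases hk : k ∈ s
  · exact mul_le_mul_of_nonneg_right (hf k hk) (sq_nonneg _)
  · simp [hc k hk]

/-- Courant–Fischer comparison of the spectra of `Σ` and `Σ + E`. -/
lemma le_of_spectralSum_add_eq (hu : ∀ k l, u k ⬝ᵥ u l = if k = l then (1 : ℝ) else 0)
    (huh : ∀ k l, uh k ⬝ᵥ uh l = if k = l then (1 : ℝ) else 0) {lam lamh : Fin d → ℝ}
    {E : Matrix (Fin d) (Fin d) ℝ} (hdecomp : spectralSum u lam + E = spectralSum uh lamh)
    {β : Fin d → ℝ} (hβ : ∀ v, v ⬝ᵥ (E *ᵥ v) ≤ ∑ k, β k * (u k ⬝ᵥ v) ^ 2)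
    {s t : Finset (Fin d)} (hst : d < #s + #t) {a b : ℝ}
    (hs : ∀ k ∈ s, lam k + β k ≤ b) (ht : ∀ k ∈ t, a ≤ lamh k) : a ≤ b := by
  obtain ⟨v, hv0, hvs, hvt⟩ := exists_ne_zero_orthogonal (u := u) (uh := uh) s t hst
  have hvv : 0 < v ⬝ᵥ v :=
    lt_of_le_of_ne (norm_toLp_sq v ▸ sq_nonneg _) (Ne.symm (dotProduct_self_eq_zero.not.mpr hv0))
  refine le_of_mul_le_mul_right ?_ hvv
  calc a * (v ⬝ᵥ v) ≤ ∑ k, lamh k * (uh k ⬝ᵥ v) ^ 2 := by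
        rw [dotProduct_self_eq_sum_sq huh]; exact mul_sum_sq_le_of_forall_mem ht hvt
    _ = ∑ k, lam k * (u k ⬝ᵥ v) ^ 2 + v ⬝ᵥ (E *ᵥ v) := by
      rw [← dotProduct_spectralSum_mulVec_self, ← hdecomp, add_mulVec, dotProduct_add,
        dotProduct_spectralSum_mulVec_self]
    _ ≤ ∑ k, (lam k + β k) * (u k ⬝ᵥ v) ^ 2 := by
      simp only [add_mul, sum_add_distrib]; exact add_le_add le_rfl (hβ v)
    _ ≤ b * (v ⬝ᵥ v) := by
      rw [dotProduct_self_eq_sum_sq hu]; exact sum_mul_sq_le_of_forall_mem hs hvs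

end MinMax

noncomputable def gapWeight {d : ℕ} (lam : Fin d → ℝ) (j : Fin d) (g : ℝ) : Fin d → ℝ :=
  fun k => if k = j then g else |lam k - lam j|

section Resolvent

variable {d : ℕ} {lam : Fin d → ℝ} {u : Fin d → Fin d → ℝ} {j : Fin d} {g : ℝ}

lemma gapWeight_pos (hg0 : 0 < g) (hg : ∀ k ≠ j, g ≤ |lam k - lam j|) (k : Fin d) :
    0 < gapWeight lam j g k := by
  unfold gapWeight; split_ifs with hk
  · exact hg0
  · exact hg0.trans_le (hg k hk)

lemma gapWeight_of_lt (hlam : Antitone lam) {k : Fin d} (hk : j < k) :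
    gapWeight lam j g k = lam j - lam k := by
  rw [gapWeight, if_neg hk.ne', abs_of_nonpos (sub_nonpos.mpr (hlam hk.le)), neg_sub]

lemma gapWeight_of_gt (hlam : Antitone lam) {k : Fin d} (hk : k < j) :
    gapWeight lam j g k = lam k - lam j := by
  rw [gapWeight, if_neg hk.ne, abs_of_nonneg (sub_nonneg.mpr (hlam hk.le))]

lemma sqrtAbsRes_eq_spectralSum : sqrtAbsRes lam u j =
    spectralSum u (fun k => if k = j then 0 else (√|lam k - lam j|)⁻¹) :=
  sum_filter_ne_smul_proj j _

lemma invSqrtAbsRes_eq_spectralSum : invSqrtAbsRes lam u j =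
    spectralSum u (fun k => if k = j then 0 else √|lam k - lam j|) :=
  sum_filter_ne_smul_proj j _

lemma res_eq_spectralSum : res lam u j =
    spectralSum u (fun k => if k = j then 0 else (lam k - lam j)⁻¹) :=
  sum_filter_ne_smul_proj j _

lemma sqrtAbsRes_add_smul_proj_eq_spectralSum :
    sqrtAbsRes lam u j + (√g)⁻¹ • proj (u j) =
      spectralSum u (fun k => (√(gapWeight lam j g k))⁻¹) := by
  rw [sqrtAbsRes_eq_spectralSum, proj_eq_spectralSum, ← spectralSum_smul, ← spectralSum_add]
  congr 1; funext k
  simp only [gapWeight, Pi.add_apply, Pi.smul_apply, smul_eq_mul]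
  split_ifs <;> simp

variable (hu : ∀ k l, u k ⬝ᵥ u l = if k = l then (1 : ℝ) else 0)

include hu in
lemma sqrtAbsRes_mul_invSqrtAbsRes (hg0 : 0 < g) (hg : ∀ k ≠ j, g ≤ |lam k - lam j|) :
    sqrtAbsRes lam u j * invSqrtAbsRes lam u j = 1 - proj (u j) := by
  rw [sqrtAbsRes_eq_spectralSum, invSqrtAbsRes_eq_spectralSum, one_sub_proj_eq_spectralSum hu]
  refine spectralSum_mul_eq hu fun k => ?_
  split_ifs with hk
  · simp
  · exact inv_mul_cancel₀ (Real.sqrt_pos.mpr (hg0.trans_le (hg k hk))).ne'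

include hu in
lemma norm_sqrtAbsRes_le (hg0 : 0 < g) (hg : ∀ k ≠ j, g ≤ |lam k - lam j|) :
    ‖sqrtAbsRes lam u j‖ ≤ (√g)⁻¹ := by
  rw [sqrtAbsRes_eq_spectralSum]
  refine norm_spectralSum_le hu (by positivity) fun k => ?_
  split_ifs with hk
  · simp
  · rw [abs_of_nonneg (by positivity)]
    exact inv_anti₀ (Real.sqrt_pos.mpr hg0) (Real.sqrt_le_sqrt (hg k hk))

include hu in
lemma exists_res_eq_sqrtAbsRes_mul_mul (hL : ∀ k ≠ j, lam k ≠ lam j) :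
    ∃ W, ‖W‖ ≤ 1 ∧ res lam u j = sqrtAbsRes lam u j * W * sqrtAbsRes lam u j := by
  refine ⟨spectralSum u (fun k => if k = j then 0 else |lam k - lam j| / (lam k - lam j)),
    norm_spectralSum_le hu zero_le_one fun k => ?_, ?_⟩
  · split_ifs <;> simp [abs_div, div_self_le_one]
  · rw [res_eq_spectralSum, sqrtAbsRes_eq_spectralSum, spectralSum_mul_spectralSum hu,
      spectralSum_mul_spectralSum hu]
    congr 1; funext k
    simp only [Pi.mul_apply]
    split_ifs with hk
    · simp
    · have hL' : 0 < |lam k - lam j| := abs_pos.mpr (sub_ne_zero.mpr (hL k hk))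
      field_simp
      rw [Real.sq_sqrt hL'.le]

include hu in
lemma delta'_le_delta (hg : 0 < g) (E : Matrix (Fin d) (Fin d) ℝ) :
    delta' lam u j g E ≤ delta lam u j g E := by
  rw [delta, delta', opNorm_eq_norm, opNorm_eq_norm, sqrtAbsRes_add_smul_proj_eq_spectralSum]
  set F := spectralSum u (fun k => (√(gapWeight lam j g k))⁻¹)
  set S := sqrtAbsRes lam u j with hS
  set P := proj (u j) with hP
  set Q : Matrix (Fin d) (Fin d) ℝ := 1 - proj (u j) with hQ
  have huj : u j ⬝ᵥ u j = 1 := by simpa using hu j j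
  have hQ1 : ‖Q‖ ≤ 1 := norm_one_sub_proj_le_one hu j
  obtain ⟨hQF, hFQ⟩ : Q * F = S ∧ F * Q = S := by
    rw [hQ, one_sub_proj_eq_spectralSum hu, hS, sqrtAbsRes_eq_spectralSum]
    constructor <;>
      exact spectralSum_mul_eq hu fun k => by simp only [gapWeight]; split_ifs <;> simp
  obtain ⟨hPF, hFP⟩ : P * F = (√g)⁻¹ • P ∧ F * P = (√g)⁻¹ • P := by
    rw [hP, proj_eq_spectralSum, ← spectralSum_smul]
    constructor <;> exact spectralSum_mul_eq hu fun k => by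
      simp only [gapWeight, Pi.smul_apply, smul_eq_mul]; split_ifs <;> simp
  have hXA : ∀ X, ‖X‖ ≤ 1 → ‖X * (F * E * F)‖ ≤ ‖F * E * F‖ := fun X hX =>
    (norm_mul_le _ _).trans (mul_le_of_le_one_left (norm_nonneg _) hX)
  have hSES : Q * (F * E * F) * Q = S * E * S := by
    rw [show Q * (F * E * F) * Q = Q * F * E * (F * Q) by simp only [Matrix.mul_assoc], hQF, hFQ]
  have hSEP : Q * (F * E * F) * P = (√g)⁻¹ • (S * E * P) := by
    rw [show Q * (F * E * F) * P = Q * F * E * (F * P) by simp only [Matrix.mul_assoc], hQF, hFP,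
      Matrix.mul_smul]
  have hPEP : P * (F * E * F) * P = g⁻¹ • (P * E * P) := by
    rw [show P * (F * E * F) * P = P * F * E * (F * P) by simp only [Matrix.mul_assoc], hPF, hFP,
      Matrix.mul_smul, Matrix.smul_mul, Matrix.smul_mul, smul_smul, ← mul_inv,
      Real.mul_self_sqrt hg.le]
  refine max_le ?_ (max_le ?_ ?_)
  · rw [← hSES]
    exact (norm_mul_le _ _).trans (mul_le_of_le_one_right (norm_nonneg _) hQ1) |>.trans
      (hXA Q hQ1)
  · rw [← hsNorm_smul (by positivity), ← hSEP]
    exact (hsNorm_mul_proj_le _ huj).trans (hXA Q hQ1)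
  · rw [← hsNorm_smul (by positivity), ← hPEP]
    exact (hsNorm_mul_proj_le _ huj).trans (hXA P (norm_proj_le_one hu j))

end Resolvent

section Perturbation

variable {d : ℕ} {lam lamh : Fin d → ℝ} {u uh : Fin d → Fin d → ℝ} {j : Fin d} {g : ℝ}
  {E : Matrix (Fin d) (Fin d) ℝ}
variable (hu : ∀ k l, u k ⬝ᵥ u l = if k = l then (1 : ℝ) else 0)
  (huh : ∀ k l, uh k ⬝ᵥ uh l = if k = l then (1 : ℝ) else 0)

include hu in
lemma abs_dotProduct_mulVec_le_delta (hw : ∀ k, 0 < gapWeight lam j g k) (v : Fin d → ℝ) :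
    |v ⬝ᵥ (E *ᵥ v)| ≤ delta lam u j g E * ∑ k, gapWeight lam j g k * (u k ⬝ᵥ v) ^ 2 := by
  rw [delta, opNorm_eq_norm, sqrtAbsRes_add_smul_proj_eq_spectralSum]
  set F := spectralSum u (fun k => (√(gapWeight lam j g k))⁻¹)
  set G := spectralSum u (fun k => √(gapWeight lam j g k))
  have hFG : F * G = 1 := by
    rw [spectralSum_mul_eq hu (h := 1) fun k => ?_, spectralSum_one hu]
    exact inv_mul_cancel₀ (Real.sqrt_pos.mpr (hw k)).ne'
  have hFt : Fᵀ = F := transpose_spectralSum _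
  have hv : v = F *ᵥ (G *ᵥ v) := by rw [mulVec_mulVec, hFG, one_mulVec]
  have hquad : v ⬝ᵥ (E *ᵥ v) = (G *ᵥ v) ⬝ᵥ ((F * E * F) *ᵥ (G *ᵥ v)) := by
    calc v ⬝ᵥ (E *ᵥ v) = (F *ᵥ (G *ᵥ v)) ⬝ᵥ (E *ᵥ (F *ᵥ (G *ᵥ v))) := by rw [← hv]
      _ = _ := by
        rw [dotProduct_comm, dotProduct_mulVec, ← mulVec_transpose, hFt, dotProduct_comm]
        simp only [mulVec_mulVec, Matrix.mul_assoc]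
  have hGv : (G *ᵥ v) ⬝ᵥ (G *ᵥ v) = ∑ k, gapWeight lam j g k * (u k ⬝ᵥ v) ^ 2 := by
    rw [dotProduct_self_eq_sum_sq hu]
    refine sum_congr rfl fun k _ => ?_
    rw [dotProduct_spectralSum_mulVec hu, mul_pow, Real.sq_sqrt (hw k).le]
  rw [hquad, ← hGv]
  exact abs_dotProduct_mulVec_self_le _ _

include hu huh in
lemma abs_sub_le_of_spectralSum_add_eq (hlam : Antitone lam) (hlamh : Antitone lamh)
    (hdecomp : spectralSum u lam + E = spectralSum uh lamh) (hg : 0 ≤ g) {δ : ℝ} (hδ0 : 0 ≤ δ)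
    (hδ1 : δ ≤ 1) (hE : ∀ v, |v ⬝ᵥ (E *ᵥ v)| ≤ δ * ∑ k, gapWeight lam j g k * (u k ⬝ᵥ v) ^ 2) :
    |lamh j - lam j| ≤ δ * g := by
  have hβ : ∀ v, |v ⬝ᵥ (E *ᵥ v)| ≤ ∑ k, (δ * gapWeight lam j g k) * (u k ⬝ᵥ v) ^ 2 :=
    fun v => by simpa only [mul_sum, mul_assoc] using hE v
  have hcard : d < #(Ici j) + #(Iic j) := by
    rw [Fin.card_Ici, Fin.card_Iic]; omega
  rw [abs_le, neg_le_sub_iff_le_add, sub_le_iff_le_add']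
  constructor
  -- the lower bound is the upper bound for `-Σ`, `-E` and `-Σ̂`
  · have hdecomp' : spectralSum u (-lam) + -E = spectralSum uh (-lamh) := by
      rw [spectralSum_neg, spectralSum_neg, ← hdecomp, neg_add]
    have := le_of_spectralSum_add_eq hu huh hdecomp' (β := fun k => δ * gapWeight lam j g k)
      (fun v => by simpa [neg_mulVec] using neg_le.mp (neg_le_of_abs_le (hβ v)))
      (by rwa [add_comm]) (a := -lamh j) (b := -(lam j - δ * g))
      (fun k hk => by
        rcases (mem_Iic.mp hk).lt_or_eq with hk | rfl
        · rw [gapWeight_of_gt hlam hk]; have := hlam hk.le; simp only [Pi.neg_apply]; nlinarith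
        · simp [gapWeight])
      (fun k hk => neg_le_neg (hlamh (mem_Ici.mp hk)))
    linarith
  · refine le_of_spectralSum_add_eq hu huh hdecomp (β := fun k => δ * gapWeight lam j g k)
      (fun v => le_of_abs_le (hβ v)) hcard (fun k hk => ?_) (fun k hk => hlamh (mem_Iic.mp hk))
    rcases (mem_Ici.mp hk).lt_or_eq with hk | rfl
    · rw [gapWeight_of_lt hlam hk]; have := hlam hk.le; nlinarith
    · simp [gapWeight]

include hu huh in
lemma sub_mul_dotProduct_eq_of_spectralSum_add_eq
    (hdecomp : spectralSum u lam + E = spectralSum uh lamh) (k l : Fin d) :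
    (lamh l - lam k) * (u k ⬝ᵥ uh l) = u k ⬝ᵥ (E *ᵥ uh l) := by
  have := congrArg (fun M => u k ⬝ᵥ (M *ᵥ uh l)) hdecomp
  simp only [add_mulVec, dotProduct_add, dotProduct_spectralSum_mulVec hu,
    spectralSum_mulVec_self huh, dotProduct_smul, smul_eq_mul] at this
  linarith

include hu huh in
lemma one_sub_delta_mul_norm_invSqrtAbsRes_le (hlam : Antitone lam) (hlamh : Antitone lamh)
    (hdecomp : spectralSum u lam + E = spectralSum uh lamh) (hg0 : 0 < g)
    (hg : ∀ k ≠ j, g ≤ |lam k - lam j|) (hδ : delta lam u j g E ≤ 1) :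
    (1 - delta lam u j g E) * ‖toLp 2 (invSqrtAbsRes lam u j *ᵥ uh j)‖ ≤
      ‖toLp 2 (sqrtAbsRes lam u j *ᵥ (E *ᵥ uh j))‖ := by
  set δ := delta lam u j g E
  have hδ0 : 0 ≤ δ := norm_nonneg _
  have heig : |lamh j - lam j| ≤ δ * g :=
    abs_sub_le_of_spectralSum_add_eq hu huh hlam hlamh hdecomp hg0.le hδ0 hδ
      (abs_dotProduct_mulVec_le_delta hu (gapWeight_pos hg0 hg))
  have hcoord : ∀ k, (1 - δ) * |u k ⬝ᵥ (invSqrtAbsRes lam u j *ᵥ uh j)| ≤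
      1 * |u k ⬝ᵥ (sqrtAbsRes lam u j *ᵥ (E *ᵥ uh j))| := fun k => by
    rw [invSqrtAbsRes_eq_spectralSum, sqrtAbsRes_eq_spectralSum, dotProduct_spectralSum_mulVec hu,
      dotProduct_spectralSum_mulVec hu, ← sub_mul_dotProduct_eq_of_spectralSum_add_eq hu huh hdecomp]
    split_ifs with hk
    · simp
    · have hL : 0 < |lam k - lam j| := hg0.trans_le (hg k hk)
      have hsqrt := Real.sqrt_pos.mpr hL
      have hgap : (1 - δ) * |lam k - lam j| ≤ |lamh j - lam k| := by
        have := abs_sub_le (lam k) (lamh j) (lam j)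
        rw [abs_sub_comm (lam k) (lamh j)] at this
        linarith [mul_le_mul_of_nonneg_left (hg k hk) hδ0]
      rw [abs_mul, abs_mul, abs_mul, abs_of_pos hsqrt, abs_of_pos (inv_pos.mpr hsqrt), one_mul,
        ← mul_assoc, ← mul_assoc]
      refine mul_le_mul_of_nonneg_right ?_ (abs_nonneg _)
      rwa [le_inv_mul_iff₀ hsqrt, mul_left_comm, Real.mul_self_sqrt hL.le]
  simpa using mul_norm_toLp_le_of_abs_dotProduct_le hu (sub_nonneg.mpr hδ) zero_le_one hcoord

include hu in
lemma norm_sqrtAbsRes_mulVec_le (hg0 : 0 < g) (hg : ∀ k ≠ j, g ≤ |lam k - lam j|)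
    {x : Fin d → ℝ} (hx : |u j ⬝ᵥ x| ≤ 1) :
    ‖toLp 2 (sqrtAbsRes lam u j *ᵥ (E *ᵥ x))‖ ≤
      ‖toLp 2 ((sqrtAbsRes lam u j * E) *ᵥ u j)‖ +
        delta' lam u j g E * ‖toLp 2 (invSqrtAbsRes lam u j *ᵥ x)‖ := by
  set S := sqrtAbsRes lam u j
  set T := invSqrtAbsRes lam u j
  have hx' : x = (u j ⬝ᵥ x) • u j + S *ᵥ (T *ᵥ x) := by
    rw [mulVec_mulVec, sqrtAbsRes_mul_invSqrtAbsRes hu hg0 hg, sub_mulVec, one_mulVec,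
      proj_mulVec]
    abel
  have hsplit : S *ᵥ (E *ᵥ x) = (u j ⬝ᵥ x) • ((S * E) *ᵥ u j) + (S * E * S) *ᵥ (T *ᵥ x) := by
    conv_lhs => rw [hx']
    simp only [mulVec_add, mulVec_smul, mulVec_mulVec, Matrix.mul_assoc]
  have hSES : ‖S * E * S‖ ≤ delta' lam u j g E := le_max_left _ _
  rw [hsplit, WithLp.toLp_add, WithLp.toLp_smul]
  refine (norm_add_le _ _).trans (add_le_add ?_ ?_)
  · rw [norm_smul, Real.norm_eq_abs]
    exact mul_le_of_le_one_left (norm_nonneg _) hx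
  · exact (norm_toLp_mulVec_le _ _).trans (by gcongr)

include hu huh in
lemma one_sub_two_delta_mul_norm_invSqrtAbsRes_le (hlam : Antitone lam) (hlamh : Antitone lamh)
    (hdecomp : spectralSum u lam + E = spectralSum uh lamh) (hg0 : 0 < g)
    (hg : ∀ k ≠ j, g ≤ |lam k - lam j|) (hδ : delta lam u j g E ≤ 1) :
    (1 - 2 * delta lam u j g E) * ‖toLp 2 (invSqrtAbsRes lam u j *ᵥ uh j)‖ ≤
      ‖toLp 2 ((sqrtAbsRes lam u j * E) *ᵥ u j)‖ := by
  have hx : |u j ⬝ᵥ uh j| ≤ 1 := by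
    simpa [norm_toLp_eq_one (by simpa using hu j j), norm_toLp_eq_one (by simpa using huh j j)]
      using abs_dotProduct_le (u j) (uh j)
  have hlower := one_sub_delta_mul_norm_invSqrtAbsRes_le hu huh hlam hlamh hdecomp hg0 hg hδ
  have hupper := norm_sqrtAbsRes_mulVec_le hu (E := E) hg0 hg hx
  have hδ' := mul_le_mul_of_nonneg_right (delta'_le_delta (lam := lam) (j := j) hu hg0 E)
    (norm_nonneg (toLp 2 (invSqrtAbsRes lam u j *ᵥ uh j)))
  linarith

include hu in
lemma norm_res_mul_pow_mulVec_le (hg0 : 0 < g) (hg : ∀ k ≠ j, g ≤ |lam k - lam j|) (n : ℕ)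
    (x : Fin d → ℝ) :
    ‖toLp 2 (((res lam u j * E) ^ n * (1 - proj (u j))) *ᵥ x)‖ ≤
      (√g)⁻¹ * (delta' lam u j g E ^ n * ‖toLp 2 (invSqrtAbsRes lam u j *ᵥ x)‖) := by
  obtain ⟨W, hW, hR⟩ := exists_res_eq_sqrtAbsRes_mul_mul (lam := lam) (j := j) hu
    fun k hk h => (hg0.trans_le (hg k hk)).ne' (by simp [h])
  set S := sqrtAbsRes lam u j
  set B := W * (S * E * S)
  have hB : ‖B‖ ≤ delta' lam u j g E :=
    (norm_mul_le _ _).trans (mul_le_of_le_one_left (norm_nonneg _) hW) |>.trans (le_max_left _ _)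
  have hconj : SemiconjBy S B (res lam u j * E) := by
    simp only [SemiconjBy, B, hR, Matrix.mul_assoc]
  rw [← sqrtAbsRes_mul_invSqrtAbsRes hu hg0 hg, ← Matrix.mul_assoc, ← (hconj.pow_right n).eq,
    ← mulVec_mulVec, ← mulVec_mulVec]
  refine (norm_toLp_mulVec_le _ _).trans (mul_le_mul (norm_sqrtAbsRes_le hu hg0 hg) ?_
    (norm_nonneg _) (by positivity))
  exact (norm_toLp_pow_mulVec_le _ _ _).trans (by gcongr)

end Perturbation

theorem stmt18_general {d : ℕ} (lam : Fin d → ℝ) (u : Fin d → Fin d → ℝ)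
    (hON : ∀ k l, u k ⬝ᵥ u l = if k = l then (1 : ℝ) else 0)
    (hlam : Antitone lam)
    (E : Matrix (Fin d) (Fin d) ℝ)
    (j : Fin d) (gj : ℝ) (hgj_pos : 0 < gj)
    (hgj : IsLeast {x : ℝ | ∃ k, k ≠ j ∧ x = |lam k - lam j|} gj)
    (lamh : Fin d → ℝ) (uh : Fin d → Fin d → ℝ)
    (hONh : ∀ k l, uh k ⬝ᵥ uh l = if k = l then (1 : ℝ) else 0)
    (hlamh : Antitone lamh)
    (hdecomp : (∑ k, lam k • proj (u k)) + E = ∑ k, lamh k • proj (uh k))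
    (hdelta : delta lam u j gj E < 1 / 2) :
    delta' lam u j gj E ≤ delta lam u j gj E ∧
      ∀ p : ℕ, 1 ≤ p →
        hsNorm ((res lam u j * E) ^ (p - 1) * ((1 - proj (u j)) * proj (uh j))) ≤
          delta' lam u j gj E ^ p / (1 - 2 * delta lam u j gj E) := by
  have hg : ∀ k ≠ j, gj ≤ |lam k - lam j| := fun k hk => hgj.2 ⟨k, hk, rfl⟩
  set δ' := delta' lam u j gj E
  have hδ'0 : 0 ≤ δ' := le_max_of_le_left (norm_nonneg _)
  have hcontraction := one_sub_two_delta_mul_norm_invSqrtAbsRes_le hON hONh hlam hlamh hdecomp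
    hgj_pos hg (by linarith)
  have hSEu : (√gj)⁻¹ * ‖toLp 2 ((sqrtAbsRes lam u j * E) *ᵥ u j)‖ ≤ δ' := by
    rw [← hsNorm_mul_proj _ (by simpa using hON j j)]
    exact le_max_of_le_right (le_max_left _ _)
  refine ⟨delta'_le_delta hON hgj_pos E, fun p hp => ?_⟩
  obtain ⟨n, rfl⟩ := Nat.exists_eq_add_of_le' hp
  rw [Nat.add_sub_cancel, ← Matrix.mul_assoc, hsNorm_mul_proj _ (by simpa using hONh j j),
    le_div_iff₀ (by linarith)]
  calc _ ≤ (√gj)⁻¹ * (δ' ^ n * ‖toLp 2 (invSqrtAbsRes lam u j *ᵥ uh j)‖) *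
          (1 - 2 * delta lam u j gj E) :=
        mul_le_mul_of_nonneg_right (norm_res_mul_pow_mulVec_le hON hgj_pos hg n (uh j))
          (by linarith)
    _ = δ' ^ n * ((√gj)⁻¹ * ((1 - 2 * delta lam u j gj E) *
          ‖toLp 2 (invSqrtAbsRes lam u j *ᵥ uh j)‖)) := by ring
    _ ≤ δ' ^ n * δ' := by
      gcongr; exact hSEu.trans' (mul_le_mul_of_nonneg_left hcontraction (by positivity))
    _ = δ' ^ (n + 1) := (pow_succ _ _).symm

theorem stmt18 {d : ℕ} (lam : Fin d → ℝ) (u : Fin d → Fin d → ℝ)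
    (hON : ∀ k l, u k ⬝ᵥ u l = if k = l then (1 : ℝ) else 0)
    (hlam : Antitone lam)
    (E : Matrix (Fin d) (Fin d) ℝ) (hE : E.IsSymm)
    (j : Fin d) (gj : ℝ) (hgj_pos : 0 < gj)
    (hgj : IsLeast {x : ℝ | ∃ k, k ≠ j ∧ x = |lam k - lam j|} gj)
    (lamh : Fin d → ℝ) (uh : Fin d → Fin d → ℝ)
    (hONh : ∀ k l, uh k ⬝ᵥ uh l = if k = l then (1 : ℝ) else 0)
    (hlamh : Antitone lamh)
    (hdecomp : (∑ k, lam k • proj (u k)) + E = ∑ k, lamh k • proj (uh k))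
    (hdelta : delta lam u j gj E < 1 / 2) :
    delta' lam u j gj E ≤ delta lam u j gj E ∧
      ∀ p : ℕ, 1 ≤ p →
        hsNorm ((res lam u j * E) ^ (p - 1) * ((1 - proj (u j)) * proj (uh j))) ≤
          delta' lam u j gj E ^ p / (1 - 2 * delta lam u j gj E) :=
  stmt18_general lam u hON hlam E j gj hgj_pos hgj lamh uh hONh hlamh hdecomp hdelta
end

section
/- If the eigenvalues satisfy λ_j = e^{−j^α} for some α ∈ (0,1], then there exists a constant C > 1 depending only on α such that for every j ≥ 1: λ_j/g_j ≤ C j^{1−α}, Σ_{k≠j} λ_k/|λ_k − λ_j| ≤ C j, and Σ_{k≠j} λ_j λ_k/(λ_k − λ_j)^2 ≤ C j^{2−2α}. -/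
/-- The eigenvalue sequence `λ_j = exp(-j^α)`. -/
noncomputable def lamExp (α : ℝ) (j : ℕ) : ℝ := Real.exp (-(j : ℝ) ^ α)

/-- The spectral gap `g_j`: `g_1 = λ_1 - λ_2`, and
`g_j = min (λ_{j-1} - λ_j) (λ_j - λ_{j+1})` for `j ≥ 2`. -/
noncomputable def gapExp (α : ℝ) (j : ℕ) : ℝ :=
  if j = 1 then lamExp α 1 - lamExp α 2
  else min (lamExp α (j - 1) - lamExp α j) (lamExp α j - lamExp α (j + 1))

/-!
Write `λ_k = exp (-x_k)` with `x_k = k ^ α` and `d = |x_k - x_j|`. Then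
`λ_k / |λ_k - λ_j| ≤ 1 + 1 / d` and `λ_j λ_k / (λ_k - λ_j) ^ 2 = 1 / (2 (cosh d - 1)) ≤ 1 / d ^ 2`.
Concavity of `t ↦ t ^ α` gives `d ≥ (α / 2) j ^ (α - 1) |k - j|` for `k ≤ 2 j`; the gap bound is
the case `|k - j| = 1`, and the indices `k ≤ 2 j` contribute `j ^ (1 - α)` times a harmonic sum,
which is `O(j)` since `log j = O(j ^ α)`, resp. `j ^ (2 - 2 α) ∑ 1 / m ^ 2`. For `k > 2 j` one has
`d ≥ (α / 2) k ^ α`, and a high-order term of the cosh series makes `1 / (cosh d - 1) = O(1 / k ^ 2)`,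
so these indices contribute a constant; there the first summand is dominated by the second.
-/

open Real Finset

lemma inv_abs_one_sub_exp_le (t : ℝ) : |1 - exp t|⁻¹ ≤ 1 + |t|⁻¹ := by
  rcases lt_trichotomy t 0 with ht | rfl | ht
  · have hs : -t ≤ exp (-t) - 1 := by linarith [add_one_le_exp (-t)]
    have hpos : 0 < 1 - exp t := by linarith [exp_lt_one_iff.mpr ht]
    have hsplit : (1 - exp t)⁻¹ = 1 + (exp (-t) - 1)⁻¹ := by
      rw [exp_neg]
      field_simp
      ring
    rw [abs_of_pos hpos, abs_of_neg ht, hsplit]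
    gcongr
    linarith
  · simp
  · have hs : t ≤ exp t - 1 := by linarith [add_one_le_exp t]
    rw [abs_sub_comm, abs_of_pos (by linarith), abs_of_pos ht]
    linarith [inv_anti₀ ht hs]

lemma exp_neg_div_abs_exp_neg_sub_le (a b : ℝ) :
    exp (-a) / |exp (-a) - exp (-b)| ≤ 1 + |a - b|⁻¹ := by
  have h : exp (-a) - exp (-b) = exp (-a) * (1 - exp (a - b)) := by
    rw [mul_sub, ← exp_add]; ring_nf
  rw [h, abs_mul, abs_of_pos (exp_pos _), div_mul_cancel_left₀ (exp_pos _).ne']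
  exact inv_abs_one_sub_exp_le _

lemma exp_neg_mul_exp_neg_div_sq (a b : ℝ) :
    exp (-a) * exp (-b) / (exp (-b) - exp (-a)) ^ 2 = (2 * (cosh (b - a) - 1))⁻¹ := by
  have h : 2 * (cosh (b - a) - 1) = (exp (-b) - exp (-a)) ^ 2 / (exp (-a) * exp (-b)) := by
    simp only [cosh_eq, exp_sub, exp_neg, neg_sub]
    field_simp
    ring
  rw [h, inv_div]

lemma div_abs_sub_le_mul_div_sq {u v : ℝ} (hvu : v ≤ u) :
    v / |v - u| ≤ u * v / (v - u) ^ 2 := by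
  rcases hvu.eq_or_lt with rfl | hlt
  · simp
  rw [abs_of_neg (by linarith), div_le_div_iff₀ (by linarith) (by nlinarith)]
  nlinarith [sq_nonneg v]

lemma pow_div_factorial_le_cosh_sub_one (x : ℝ) {n : ℕ} (hn : n ≠ 0) :
    x ^ (2 * n) / (2 * n).factorial ≤ cosh x - 1 := by
  have h := sum_le_hasSum {0, n}
    (fun i _ => div_nonneg (by rw [pow_mul]; positivity) (by positivity)) (hasSum_cosh x)
  rw [sum_pair hn.symm] at h
  simp at h
  linarith

lemma inv_two_mul_cosh_sub_one_le_inv_sq (x : ℝ) : (2 * (cosh x - 1))⁻¹ ≤ (x ^ 2)⁻¹ := by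
  rcases eq_or_ne x 0 with rfl | hx
  · simp
  refine inv_anti₀ (by positivity) ?_
  have := pow_div_factorial_le_cosh_sub_one x one_ne_zero
  norm_num at this
  linarith

lemma exists_inv_two_mul_cosh_sub_one_le {p c : ℝ} (hp : 0 < p) (hc : 0 < c) :
    ∃ M : ℝ, 0 < M ∧ ∀ k : ℕ, 1 ≤ k → ∀ d, c * (k : ℝ) ^ p ≤ d →
      (2 * (cosh d - 1))⁻¹ ≤ M / (k : ℝ) ^ 2 := by
  set N := ⌈p⁻¹⌉₊
  have hN : N ≠ 0 := (Nat.ceil_pos.mpr (inv_pos.mpr hp)).ne'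
  have hpN : 1 ≤ p * N :=
    calc 1 = p * p⁻¹ := (mul_inv_cancel₀ hp.ne').symm
      _ ≤ p * N := by gcongr; exact Nat.le_ceil _
  refine ⟨(2 * N).factorial / (2 * c ^ (2 * N)), by positivity, fun k hk d hd => ?_⟩
  have hk1 : (1 : ℝ) ≤ k := by exact_mod_cast hk
  have hkN : (k : ℝ) ≤ ((k : ℝ) ^ p) ^ N := by
    rw [← rpow_mul_natCast (by positivity)]
    simpa using rpow_le_rpow_of_exponent_le hk1 hpN
  have hpow : c ^ (2 * N) * (k : ℝ) ^ 2 ≤ d ^ (2 * N) :=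
    calc c ^ (2 * N) * (k : ℝ) ^ 2 ≤ c ^ (2 * N) * (((k : ℝ) ^ p) ^ N) ^ 2 := by gcongr
      _ = (c * (k : ℝ) ^ p) ^ (2 * N) := by ring
      _ ≤ d ^ (2 * N) := by gcongr
  calc (2 * (cosh d - 1))⁻¹ ≤ (2 * (c ^ (2 * N) * (k : ℝ) ^ 2 / (2 * N).factorial))⁻¹ := by
        refine inv_anti₀ (by positivity) ?_
        grw [hpow, pow_div_factorial_le_cosh_sub_one d hN]
    _ = (2 * N).factorial / (2 * c ^ (2 * N)) / (k : ℝ) ^ 2 := by field_simp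

lemma mul_rpow_sub_one_mul_sub_le_rpow_sub_rpow {p y z : ℝ} (hp0 : 0 ≤ p) (hp1 : p ≤ 1)
    (hy : 0 ≤ y) (hyz : y ≤ z) : p * z ^ (p - 1) * (z - y) ≤ z ^ p - y ^ p := by
  rcases hyz.eq_or_lt with rfl | hlt
  · simp
  have hz : 0 < z := hy.trans_lt hlt
  have hbern := rpow_one_add_le_one_add_mul_self (s := y / z - 1)
    (by linarith [div_nonneg hy hz.le]) hp0 hp1
  rw [add_sub_cancel, div_rpow hy hz.le, div_le_iff₀ (rpow_pos_of_pos hz p)] at hbern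
  rw [rpow_sub_one hz.ne']
  have : z ^ p / z * (z - y) = z ^ p * (1 - y / z) := by field_simp
  nlinarith [rpow_pos_of_pos hz p]

lemma mul_abs_sub_le_two_mul_rpow_mul_abs_rpow_sub_rpow {p x y : ℝ} (hp0 : 0 ≤ p) (hp1 : p ≤ 1)
    (hx : 0 < x) (hy : 0 ≤ y) (hyx : y ≤ 2 * x) :
    p * |y - x| ≤ 2 * x ^ (1 - p) * |y ^ p - x ^ p| := by
  have hx1 : x ^ (1 - p) * x ^ (p - 1) = 1 := by
    rw [← rpow_add hx]; simp
  have hxp : 0 ≤ x ^ (1 - p) := by positivity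
  rcases le_total y x with hle | hle
  · have h := mul_rpow_sub_one_mul_sub_le_rpow_sub_rpow hp0 hp1 hy hle
    have hd : 0 ≤ x ^ p - y ^ p := by linarith [rpow_le_rpow hy hle hp0]
    rw [abs_of_nonpos (by linarith), abs_of_nonpos (by linarith)]
    calc p * -(y - x) = x ^ (1 - p) * (p * x ^ (p - 1) * (x - y)) := by
          linear_combination (-(p * (x - y))) * hx1
      _ ≤ x ^ (1 - p) * (x ^ p - y ^ p) := by gcongr
      _ ≤ 2 * x ^ (1 - p) * -(y ^ p - x ^ p) := by nlinarith
  · have h := mul_rpow_sub_one_mul_sub_le_rpow_sub_rpow hp0 hp1 hx.le hle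
    have hmono : (2 * x) ^ (p - 1) ≤ y ^ (p - 1) :=
      rpow_le_rpow_of_nonpos (hx.trans_le hle) hyx (by linarith)
    have htwo : 1 / 2 ≤ (2 : ℝ) ^ (p - 1) := by
      calc (1 / 2 : ℝ) = 2 ^ (-1 : ℝ) := by norm_num [rpow_neg_one]
        _ ≤ 2 ^ (p - 1) := rpow_le_rpow_of_exponent_le (by norm_num) (by linarith)
    rw [mul_rpow (by norm_num) hx.le] at hmono
    have hhalf : x ^ (p - 1) / 2 ≤ y ^ (p - 1) := by nlinarith [rpow_pos_of_pos hx (p - 1)]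
    rw [abs_of_nonneg (by linarith), abs_of_nonneg (by linarith [rpow_le_rpow hx.le hle hp0])]
    calc p * (y - x) = 2 * x ^ (1 - p) * (p * (x ^ (p - 1) / 2) * (y - x)) := by
          linear_combination (-(p * (y - x))) * hx1
      _ ≤ 2 * x ^ (1 - p) * (p * y ^ (p - 1) * (y - x)) := by gcongr
      _ ≤ 2 * x ^ (1 - p) * (y ^ p - x ^ p) := by gcongr

lemma half_mul_rpow_le_rpow_sub_rpow {p x y : ℝ} (hp0 : 0 ≤ p) (hp1 : p ≤ 1)
    (hx : 0 < x) (hxy : 2 * x ≤ y) : p / 2 * y ^ p ≤ y ^ p - x ^ p := by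
  have hy : 0 < y := by linarith
  have h := mul_rpow_sub_one_mul_sub_le_rpow_sub_rpow hp0 hp1 hx.le (by linarith : x ≤ y)
  rw [rpow_sub_one hy.ne'] at h
  have : y ^ p / y * (y / 2) = y ^ p / 2 := by field_simp
  calc p / 2 * y ^ p = p * (y ^ p / y * (y / 2)) := by rw [this]; ring
    _ ≤ p * (y ^ p / y * (y - x)) := by gcongr; linarith
    _ ≤ y ^ p - x ^ p := by linarith

lemma sum_natAbs_sub_le_two_mul_sum_Icc {j : ℕ} {h : ℕ → ℝ} (h0 : ∀ m, 0 ≤ h m) {t : Finset ℕ}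
    (ht : ∀ k ∈ t, k ≠ j ∧ k ≤ 2 * j) :
    ∑ k ∈ t, h ((k : ℤ) - j).natAbs ≤ 2 * ∑ m ∈ Icc 1 j, h m := by
  classical
  set δ : ℕ → ℕ := fun k => ((k : ℤ) - j).natAbs
  have hfiber : ∀ m, #{k ∈ t | δ k = m} ≤ 2 := by
    intro m
    refine (card_le_card (t := {j - m, j + m}) fun k hk => ?_).trans card_le_two
    simp only [δ, mem_filter, mem_insert, mem_singleton] at hk ⊢
    omega
  have himage : t.image δ ⊆ Icc 1 j := fun m hm => by
    obtain ⟨k, hk, rfl⟩ := mem_image.mp hm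
    have := ht k hk
    simp only [δ, mem_Icc]
    omega
  rw [sum_comp h δ, mul_sum]
  calc ∑ m ∈ t.image δ, #{k ∈ t | δ k = m} • h m
      ≤ ∑ m ∈ t.image δ, 2 * h m :=
        sum_le_sum fun m _ => by
          rw [nsmul_eq_mul]
          gcongr
          · exact h0 m
          · exact_mod_cast hfiber m
    _ ≤ ∑ m ∈ Icc 1 j, 2 * h m :=
        sum_le_sum_of_subset_of_nonneg himage fun m _ _ => mul_nonneg zero_le_two (h0 m)

lemma sum_Icc_inv_le_rpow {p : ℝ} (hp : 0 < p) {n : ℕ} (hn : 1 ≤ n) :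
    ∑ m ∈ Icc 1 n, (m : ℝ)⁻¹ ≤ (1 + p⁻¹) * (n : ℝ) ^ p := by
  have hharm : ∑ m ∈ Icc 1 n, (m : ℝ)⁻¹ = harmonic n := by
    simp [harmonic_eq_sum_Icc]
  have h1 : (1 : ℝ) ≤ (n : ℝ) ^ p := one_le_rpow (by exact_mod_cast hn) hp.le
  have hlog : log n ≤ (n : ℝ) ^ p / p := log_le_rpow_div (Nat.cast_nonneg n) hp
  rw [hharm]
  calc (harmonic n : ℝ) ≤ 1 + log n := harmonic_le_one_add_log n
    _ ≤ (n : ℝ) ^ p + (n : ℝ) ^ p / p := by gcongr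
    _ = (1 + p⁻¹) * (n : ℝ) ^ p := by ring

lemma tsum_subtype_le_of_forall_sum_le {ι : Type*} {p : ι → Prop} {f : ι → ℝ}
    (hf : ∀ i, p i → 0 ≤ f i) {c : ℝ} (h : ∀ t : Finset ι, (∀ i ∈ t, p i) → ∑ i ∈ t, f i ≤ c) :
    ∑' i : {i // p i}, f i ≤ c :=
  Real.tsum_le_of_sum_le (fun i => hf i i.2) fun u => by
    simpa using h (u.map (Function.Embedding.subtype p)) fun i hi => by
      obtain ⟨x, -, rfl⟩ := mem_map.mp hi
      exact x.2

lemma lamExp_pos (α : ℝ) (k : ℕ) : 0 < lamExp α k := exp_pos _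

section Eigenvalues

variable {α : ℝ}

lemma lamExp_antitone (hα : 0 ≤ α) : Antitone (lamExp α) := fun k l hkl =>
  exp_le_exp.mpr (neg_le_neg (rpow_le_rpow (Nat.cast_nonneg k) (by exact_mod_cast hkl) hα))

lemma exists_gapExp_eq_abs_sub (hα : 0 ≤ α) {j : ℕ} (hj : 1 ≤ j) :
    ∃ k, k ≤ 2 * j ∧ k ≠ j ∧ ((k : ℤ) - j).natAbs = 1 ∧
      gapExp α j = |lamExp α j - lamExp α k| := by
  have hanti := lamExp_antitone hα
  unfold gapExp
  split_ifs with h1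
  · subst h1
    exact ⟨2, by norm_num, by norm_num, by norm_num,
      (abs_of_nonneg (sub_nonneg.mpr (hanti (by norm_num)))).symm⟩
  · rcases min_choice (lamExp α (j - 1) - lamExp α j) (lamExp α j - lamExp α (j + 1)) with h | h
    · refine ⟨j - 1, by omega, by omega, by omega, ?_⟩
      rw [h, abs_sub_comm, abs_of_nonneg (sub_nonneg.mpr (hanti (by omega)))]
    · refine ⟨j + 1, by omega, by omega, by omega, ?_⟩
      rw [h, abs_of_nonneg (sub_nonneg.mpr (hanti (by omega)))]

lemma inv_abs_rpow_sub_rpow_le (hα0 : 0 < α) (hα1 : α ≤ 1) {j k : ℕ} (hj : 1 ≤ j)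
    (hk : k ≤ 2 * j) (hkj : k ≠ j) :
    |(k : ℝ) ^ α - (j : ℝ) ^ α|⁻¹ ≤ 2 * (j : ℝ) ^ (1 - α) / α * (((k : ℤ) - j).natAbs : ℝ)⁻¹ := by
  have h := mul_abs_sub_le_two_mul_rpow_mul_abs_rpow_sub_rpow hα0.le hα1
    (x := j) (y := k) (by positivity) (by positivity) (by exact_mod_cast hk)
  have hcast : (((k : ℤ) - j).natAbs : ℝ) = |(k : ℝ) - j| := by
    push_cast [Nat.cast_natAbs, Int.cast_abs]; rfl
  have hd : 0 < |(k : ℝ) - j| := abs_pos.mpr (sub_ne_zero.mpr (by exact_mod_cast hkj))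
  rw [hcast, show 2 * (j : ℝ) ^ (1 - α) / α * |(k : ℝ) - j|⁻¹
    = (α * |(k : ℝ) - j| / (2 * (j : ℝ) ^ (1 - α)))⁻¹ by field_simp]
  exact inv_anti₀ (by positivity) ((div_le_iff₀' (by positivity)).mpr h)

lemma lamExp_div_gapExp_le (hα0 : 0 < α) (hα1 : α ≤ 1) {j : ℕ} (hj : 1 ≤ j) :
    lamExp α j / gapExp α j ≤ (1 + 2 / α) * (j : ℝ) ^ (1 - α) := by
  obtain ⟨k, hk, hkj, hdist, hgap⟩ := exists_gapExp_eq_abs_sub hα0.le hj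
  have hJ : (1 : ℝ) ≤ (j : ℝ) ^ (1 - α) := one_le_rpow (by exact_mod_cast hj) (by linarith)
  have hnear := inv_abs_rpow_sub_rpow_le hα0 hα1 hj hk hkj
  rw [hdist, Nat.cast_one, inv_one, mul_one, abs_sub_comm] at hnear
  rw [hgap]
  calc lamExp α j / |lamExp α j - lamExp α k| ≤ 1 + |(j : ℝ) ^ α - (k : ℝ) ^ α|⁻¹ :=
        exp_neg_div_abs_exp_neg_sub_le _ _
    _ ≤ 1 + 2 * (j : ℝ) ^ (1 - α) / α := by gcongr
    _ ≤ (1 + 2 / α) * (j : ℝ) ^ (1 - α) := by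
        rw [add_mul, mul_div_right_comm]; gcongr; linarith

lemma sum_lamExp_div_abs_sub_le_of_near (hα0 : 0 < α) (hα1 : α ≤ 1) {j : ℕ} (hj : 1 ≤ j)
    {t : Finset ℕ} (ht : ∀ k ∈ t, k ≠ j ∧ k ≤ 2 * j) :
    ∑ k ∈ t, lamExp α k / |lamExp α k - lamExp α j| ≤ (2 + 4 * (1 + α⁻¹) / α) * j := by
  set B := 2 * (j : ℝ) ^ (1 - α) / α
  have hBj : B * (j : ℝ) ^ α = 2 / α * j := by
    rw [div_mul_eq_mul_div, mul_assoc, ← rpow_add (by positivity)]; simp; ring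
  calc ∑ k ∈ t, lamExp α k / |lamExp α k - lamExp α j|
      ≤ ∑ k ∈ t, (1 + B * ((((k : ℤ) - j).natAbs : ℕ) : ℝ)⁻¹) := sum_le_sum fun k hk => by
        refine (exp_neg_div_abs_exp_neg_sub_le _ _).trans ?_
        gcongr
        exact inv_abs_rpow_sub_rpow_le hα0 hα1 hj (ht k hk).2 (ht k hk).1
    _ ≤ 2 * ∑ m ∈ Icc 1 j, (1 + B * (m : ℝ)⁻¹) :=
        sum_natAbs_sub_le_two_mul_sum_Icc (h := fun m => 1 + B * (m : ℝ)⁻¹) (fun m => by positivity) ht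
    _ = 2 * (j + B * ∑ m ∈ Icc 1 j, (m : ℝ)⁻¹) := by
        rw [sum_add_distrib, ← mul_sum]; simp
    _ ≤ 2 * (j + B * ((1 + α⁻¹) * (j : ℝ) ^ α)) := by grw [sum_Icc_inv_le_rpow hα0 hj]
    _ = (2 + 4 * (1 + α⁻¹) / α) * j := by
        rw [mul_left_comm, hBj]; ring

lemma sum_lamExp_mul_div_sq_le_of_near (hα0 : 0 < α) (hα1 : α ≤ 1) {j : ℕ} (hj : 1 ≤ j)
    {t : Finset ℕ} (ht : ∀ k ∈ t, k ≠ j ∧ k ≤ 2 * j) :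
    ∑ k ∈ t, lamExp α j * lamExp α k / (lamExp α k - lamExp α j) ^ 2 ≤
      8 / α ^ 2 * (π ^ 2 / 6) * (j : ℝ) ^ (2 - 2 * α) := by
  set B := 2 * (j : ℝ) ^ (1 - α) / α
  have hB : B ^ 2 = 4 / α ^ 2 * (j : ℝ) ^ (2 - 2 * α) := by
    rw [div_pow, mul_pow, ← rpow_mul_natCast (Nat.cast_nonneg j)]; ring_nf
  calc ∑ k ∈ t, lamExp α j * lamExp α k / (lamExp α k - lamExp α j) ^ 2
      ≤ ∑ k ∈ t, B ^ 2 * (1 / ((((k : ℤ) - j).natAbs : ℕ) : ℝ) ^ 2) := sum_le_sum fun k hk => by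
        rw [lamExp, lamExp, exp_neg_mul_exp_neg_div_sq]
        calc _ ≤ (((k : ℝ) ^ α - (j : ℝ) ^ α) ^ 2)⁻¹ := inv_two_mul_cosh_sub_one_le_inv_sq _
          _ = (|(k : ℝ) ^ α - (j : ℝ) ^ α|⁻¹) ^ 2 := by rw [inv_pow, sq_abs]
          _ ≤ (B * ((((k : ℤ) - j).natAbs : ℕ) : ℝ)⁻¹) ^ 2 := by
              gcongr
              exact inv_abs_rpow_sub_rpow_le hα0 hα1 hj (ht k hk).2 (ht k hk).1
          _ = _ := by ring
    _ ≤ 2 * ∑ m ∈ Icc 1 j, B ^ 2 * (1 / (m : ℝ) ^ 2) :=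
        sum_natAbs_sub_le_two_mul_sum_Icc (h := fun m => B ^ 2 * (1 / (m : ℝ) ^ 2)) (fun m => by positivity) ht
    _ ≤ 2 * (B ^ 2 * (π ^ 2 / 6)) := by
        rw [← mul_sum]
        grw [sum_le_hasSum _ (fun m _ => by positivity) hasSum_zeta_two]
    _ = 8 / α ^ 2 * (π ^ 2 / 6) * (j : ℝ) ^ (2 - 2 * α) := by rw [hB]; ring


lemma lamExp_div_abs_sub_le_mul_div_sq (hα : 0 ≤ α) {j k : ℕ} (hjk : j ≤ k) :
    lamExp α k / |lamExp α k - lamExp α j| ≤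
      lamExp α j * lamExp α k / (lamExp α k - lamExp α j) ^ 2 :=
  div_abs_sub_le_mul_div_sq (lamExp_antitone hα hjk)

lemma exists_sum_lamExp_mul_div_sq_le_of_far (hα0 : 0 < α) (hα1 : α ≤ 1) :
    ∃ M : ℝ, 0 ≤ M ∧ ∀ j : ℕ, 1 ≤ j → ∀ t : Finset ℕ, (∀ k ∈ t, 2 * j < k) →
      ∑ k ∈ t, lamExp α j * lamExp α k / (lamExp α k - lamExp α j) ^ 2 ≤ M := by
  obtain ⟨M, hM0, hM⟩ := exists_inv_two_mul_cosh_sub_one_le hα0 (half_pos hα0)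
  refine ⟨M * (π ^ 2 / 6), by positivity, fun j hj t ht => ?_⟩
  calc ∑ k ∈ t, lamExp α j * lamExp α k / (lamExp α k - lamExp α j) ^ 2
      ≤ ∑ k ∈ t, M * (1 / (k : ℝ) ^ 2) := sum_le_sum fun k hk => by
        rw [lamExp, lamExp, exp_neg_mul_exp_neg_div_sq, mul_one_div]
        exact hM k (by linarith [ht k hk]) _ (half_mul_rpow_le_rpow_sub_rpow hα0.le hα1
          (by positivity) (by exact_mod_cast (ht k hk).le))
    _ ≤ M * (π ^ 2 / 6) := by
        rw [← mul_sum]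
        grw [sum_le_hasSum _ (fun m _ => by positivity) hasSum_zeta_two]

lemma exists_tsum_lamExp_div_abs_sub_le (hα0 : 0 < α) (hα1 : α ≤ 1) :
    ∃ C : ℝ, ∀ j : ℕ, 1 ≤ j →
      ∑' k : {k : ℕ // 1 ≤ k ∧ k ≠ j}, lamExp α k / |lamExp α k - lamExp α j| ≤ C * j := by
  obtain ⟨M, hM0, hM⟩ := exists_sum_lamExp_mul_div_sq_le_of_far hα0 hα1
  refine ⟨2 + 4 * (1 + α⁻¹) / α + M, fun j hj => ?_⟩
  refine tsum_subtype_le_of_forall_sum_le (f := fun k => lamExp α k / |lamExp α k - lamExp α j|)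
    (fun k _ => div_nonneg (lamExp_pos α k).le (abs_nonneg _)) fun t ht => ?_
  have hnear := sum_lamExp_div_abs_sub_le_of_near hα0 hα1 hj (t := {k ∈ t | k ≤ 2 * j})
    fun k hk => ⟨(ht k (mem_filter.mp hk).1).2, (mem_filter.mp hk).2⟩
  have hfar := (sum_le_sum fun k hk => lamExp_div_abs_sub_le_mul_div_sq hα0.le
    (by have := (mem_filter.mp hk).2; omega)).trans
    (hM j hj {k ∈ t | ¬k ≤ 2 * j} fun k hk => by have := (mem_filter.mp hk).2; omega)
  have hMj : M ≤ M * j := le_mul_of_one_le_right hM0 (by exact_mod_cast hj)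
  rw [← sum_filter_add_sum_filter_not t (· ≤ 2 * j), add_mul]
  exact add_le_add hnear (hfar.trans hMj)

lemma exists_tsum_lamExp_mul_div_sq_le (hα0 : 0 < α) (hα1 : α ≤ 1) :
    ∃ C : ℝ, ∀ j : ℕ, 1 ≤ j →
      ∑' k : {k : ℕ // 1 ≤ k ∧ k ≠ j},
        lamExp α j * lamExp α k / (lamExp α k - lamExp α j) ^ 2 ≤ C * (j : ℝ) ^ (2 - 2 * α) := by
  obtain ⟨M, hM0, hM⟩ := exists_sum_lamExp_mul_div_sq_le_of_far hα0 hα1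
  refine ⟨8 / α ^ 2 * (π ^ 2 / 6) + M, fun j hj => ?_⟩
  refine tsum_subtype_le_of_forall_sum_le
    (f := fun k => lamExp α j * lamExp α k / (lamExp α k - lamExp α j) ^ 2)
    (fun k _ => div_nonneg (mul_pos (lamExp_pos α j) (lamExp_pos α k)).le (sq_nonneg _))
    fun t ht => ?_
  have hnear := sum_lamExp_mul_div_sq_le_of_near hα0 hα1 hj (t := {k ∈ t | k ≤ 2 * j})
    fun k hk => ⟨(ht k (mem_filter.mp hk).1).2, (mem_filter.mp hk).2⟩
  have hfar := hM j hj {k ∈ t | ¬k ≤ 2 * j} fun k hk => by have := (mem_filter.mp hk).2; omega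
  have hMj : M ≤ M * (j : ℝ) ^ (2 - 2 * α) :=
    le_mul_of_one_le_right hM0 (one_le_rpow (by exact_mod_cast hj) (by linarith))
  rw [← sum_filter_add_sum_filter_not t (· ≤ 2 * j), add_mul]
  exact add_le_add hnear (hfar.trans hMj)

end Eigenvalues

theorem stmt19 (α : ℝ) (hα0 : 0 < α) (hα1 : α ≤ 1) :
    ∃ C : ℝ, 1 < C ∧ ∀ j : ℕ, 1 ≤ j →
      lamExp α j / gapExp α j ≤ C * (j : ℝ) ^ (1 - α) ∧
      (∑' k : {k : ℕ // 1 ≤ k ∧ k ≠ j},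
          lamExp α k / |lamExp α k - lamExp α j|) ≤ C * (j : ℝ) ∧
      (∑' k : {k : ℕ // 1 ≤ k ∧ k ≠ j},
          lamExp α j * lamExp α k / (lamExp α k - lamExp α j) ^ 2) ≤
        C * (j : ℝ) ^ (2 - 2 * α) := by
  obtain ⟨C₂, hC₂⟩ := exists_tsum_lamExp_div_abs_sub_le hα0 hα1
  obtain ⟨C₃, hC₃⟩ := exists_tsum_lamExp_mul_div_sq_le hα0 hα1
  refine ⟨max (1 + 2 / α) (max C₂ C₃), lt_max_of_lt_left (by linarith [div_pos two_pos hα0]),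
    fun j hj => ⟨?_, ?_, ?_⟩⟩
  · exact (lamExp_div_gapExp_le hα0 hα1 hj).trans (by gcongr; exact le_max_left _ _)
  · exact (hC₂ j hj).trans (by gcongr; exact (le_max_left _ _).trans (le_max_right _ _))
  · exact (hC₃ j hj).trans (by gcongr; exact (le_max_right _ _).trans (le_max_right _ _))
end
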